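/- arXiv:1908.00291 — 4 statements merged into one kernel-verified Lean document; each statement's English description precedes it below -/
import Mathlib

section
/- Let v be an admissible weight function, let X = C_{0,v}(ℝ₊), and let 𝒯 = {T_t : t ≥ 0} be the semigroup of left translation operators on X. Then the following are equivalent: (1) sup{ v(x)/v(y) : 0 ≤ x ≤ y } = ∞; (2) there exists f ∈ X such that T_t f does not converge to 0 in norm as t → ∞; (3) 𝒯 is not uniformly bounded; (4) 𝒯 is not uniformly equicontinuous; (5) 𝒯 is not equicontinuous; (6) 𝒯 has nonzero topological entropy; (7) 𝒯 has infinite topological entropy. -/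
open MeasureTheory Filter Set
open scoped ENNReal

/-- Membership in `C_{0,v}(ℝ₊)`: continuous on `[0,∞)` with `|f x| * v x → 0` as `x → ∞`. -/
def MemC0 (v : ℝ → ℝ) (f : ℝ → ℝ) : Prop :=
  ContinuousOn f (Set.Ici (0:ℝ)) ∧
    Filter.Tendsto (fun x => |f x| * v x) Filter.atTop (nhds 0)

/-- The norm on `C_{0,v}(ℝ₊)`: `‖f‖ = sup { |f x| * v x : x ≥ 0 }`. -/
noncomputable def c0Norm (v : ℝ → ℝ) (f : ℝ → ℝ) : ℝ :=
  sSup ((fun x => |f x| * v x) '' Set.Ici (0:ℝ))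

/-- The left translation operator `(T_t f)(x) = f (x + t)`. -/
def translateW (t : ℝ) (f : ℝ → ℝ) : ℝ → ℝ := fun x => f (x + t)

/-- `v` is an admissible weight function. -/
def AdmissibleWeight (v : ℝ → ℝ) : Prop :=
  (∀ x, 0 ≤ x → 0 < v x) ∧
  (∀ a, 0 ≤ a → IntegrableOn v (Set.Icc (0:ℝ) a)) ∧
  ∃ M, 1 ≤ M ∧ ∃ w, 0 ≤ w ∧ ∀ x, 0 ≤ x → ∀ t, 0 ≤ t →
    v x ≤ M * Real.exp (w * t) * v (x + t)

/-- The set `{ v x / v y : 0 ≤ x ≤ y }`. -/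
def ratioSet (v : ℝ → ℝ) : Set ℝ := {r | ∃ x y, 0 ≤ x ∧ x ≤ y ∧ r = v x / v y}

/-- `S` is a `(t,ε)`-separated set for the family `{T_u : u ≥ 0}` with respect to the
distance `d`: distinct points of `S` are `ε`-apart at some time `u ∈ [0,t]`. -/
def IsSepSet {X : Type*} (d : X → X → ℝ) (T : ℝ → X → X) (t ε : ℝ) (S : Set X) : Prop :=
  ∀ f ∈ S, ∀ g ∈ S, f ≠ g → ∃ u ∈ Set.Icc (0:ℝ) t, ε ≤ d (T u f) (T u g)

/-- The largest cardinality `s_{t,ε}(𝒯,K)` of a `(t,ε)`-separated subset of `K`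
(as an extended natural number, viewed in `ℝ≥0∞`). -/
noncomputable def maxSep {X : Type*} (d : X → X → ℝ) (T : ℝ → X → X) (K : Set X)
    (t ε : ℝ) : ℝ≥0∞ :=
  ⨆ (S : Finset X) (_ : ↑S ⊆ K ∧ IsSepSet d T t ε ↑S), (S.card : ℝ≥0∞)

open Classical in
/-- Extended-real logarithm of an extended nonnegative real. -/
noncomputable def elog (x : ℝ≥0∞) : EReal :=
  if x = ⊤ then ⊤ else ((Real.log x.toReal : ℝ) : EReal)

/-- The topological entropy `h(𝒯,K)` of the family `{T_u : u ≥ 0}` on the set `K`,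
with respect to the distance `d`; since `ε ↦ limsup_t (1/t) log s_{t,ε}` is antitone,
the limit as `ε → 0⁺` is the supremum over `ε > 0`. -/
noncomputable def entropyOn {X : Type*} (d : X → X → ℝ) (T : ℝ → X → X) (K : Set X) : EReal :=
  ⨆ (ε : ℝ) (_ : 0 < ε),
    Filter.limsup (fun t : ℝ => ((t⁻¹ : ℝ) : EReal) * elog (maxSep d T K t ε)) Filter.atTop

/-- Sequential compactness of a set with respect to a (pseudo)distance `d`; for metric
spaces this is equivalent to compactness. -/
def DSeqCompact {X : Type*} (d : X → X → ℝ) (K : Set X) : Prop :=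
  ∀ u : ℕ → X, (∀ n, u n ∈ K) → ∃ g ∈ K, ∃ φ : ℕ → ℕ, StrictMono φ ∧
    Filter.Tendsto (fun n => d (u (φ n)) g) Filter.atTop (nhds 0)

/-- The topological entropy `h(𝒯) = sup { h(𝒯,K) : K ⊆ A compact }` of the family
`{T_u : u ≥ 0}` on the space `A`, with respect to the distance `d`. -/
noncomputable def entropyFam {X : Type*} (d : X → X → ℝ) (T : ℝ → X → X) (A : Set X) : EReal :=
  ⨆ (K : Set X) (_ : K ⊆ A ∧ DSeqCompact d K), entropyOn d T K

/-!
If `R = sup {v x / v y : 0 ≤ x ≤ y}` is finite, then `‖T_t f‖ ≤ R sup_{x ≥ t} |f x| v x`, so the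
semigroup is bounded and every orbit tends to `0`. A bounded semigroup is uniformly equicontinuous
and has zero entropy: a `(t, ε)`-separated subset of a compact set injects into a fixed finite
net. Conversely, equicontinuity at `0` alone bounds the semigroup, by homogeneity of the norm.

If the ratios are unbounded, there are *blocks* `x ≤ y` with `y - x` as large as we like and
`v ≤ 2⁻ⁿ v x` on `[y - 1, y]`. A tent of height `(v x)⁻¹` centred at `p ∈ [y - 1, y]` has norm at
most `2⁻ⁿ`, while its translate by `p - x` has norm at least `1`. One bump in each of a sequence
of disjoint blocks gives an orbit not tending to `0`. In block `n`, the `2 ^ m` on/off patterns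
of `m ≥ 2 n (y - x)` bumps are `(y - x, 1)`-separated; together with `0` they form a compact set
on which `s_{t,1}` grows like `e^{n t}` along `t = y - x`, so the entropy is infinite.
-/

open Topology

noncomputable def tent (p r : ℝ) (z : ℝ) : ℝ := max 0 (1 - |z - p| / r)

theorem continuous_tent (p r : ℝ) : Continuous (tent p r) := by
  unfold tent; fun_prop

theorem tent_nonneg (p r z : ℝ) : 0 ≤ tent p r z := le_max_left _ _

theorem tent_le_one {r : ℝ} (hr : 0 < r) (p z : ℝ) : tent p r z ≤ 1 :=
  max_le zero_le_one (by linarith [div_nonneg (abs_nonneg (z - p)) hr.le])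

theorem tent_self (p r : ℝ) : tent p r p = 1 := by
  simp [tent]

theorem tent_eq_zero {p r z : ℝ} (hr : 0 < r) (hz : r ≤ |z - p|) : tent p r z = 0 :=
  max_eq_left (by linarith [(one_le_div hr).2 hz])

noncomputable def bumpSum {ι : Type*} (p : ι → ℝ) (r : ℝ) (a : ι → ℝ) (z : ℝ) : ℝ :=
  ∑' i, a i * tent (p i) r z

section bumpSum

variable {ι : Type*} {p : ι → ℝ} {r : ℝ} {a : ι → ℝ} {z : ℝ}

theorem bumpSum_eq_zero (hr : 0 < r) (hz : ∀ i, r ≤ |z - p i|) : bumpSum p r a z = 0 := by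
  simp [bumpSum, tent_eq_zero hr (hz _)]

theorem bumpSum_eq_single (hp : Pairwise fun i j => 4 * r ≤ |p i - p j|) (hr : 0 < r) {i : ι}
    (hz : |z - p i| < 2 * r) : bumpSum p r a z = a i * tent (p i) r z := by
  refine tsum_eq_single i fun j hji => ?_
  have : |p j - p i| ≤ |z - p j| + |z - p i| := by
    simpa [abs_sub_comm] using abs_sub_le (p j) z (p i)
  rw [tent_eq_zero hr (by linarith [hp hji]), mul_zero]

theorem bumpSum_apply_center (hp : Pairwise fun i j => 4 * r ≤ |p i - p j|) (hr : 0 < r) (i : ι) :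
    bumpSum p r a (p i) = a i := by
  rw [bumpSum_eq_single hp hr (i := i) (by simpa using hr), tent_self, mul_one]

theorem bumpSum_eq_zero_or (hp : Pairwise fun i j => 4 * r ≤ |p i - p j|) (hr : 0 < r) (z : ℝ) :
    bumpSum p r a z = 0 ∨ ∃ i, |z - p i| < r ∧ |bumpSum p r a z| ≤ |a i| := by
  by_cases h : ∃ i, |z - p i| < r
  · obtain ⟨i, hi⟩ := h
    refine .inr ⟨i, hi, ?_⟩
    rw [bumpSum_eq_single hp hr (by linarith), abs_mul, abs_of_nonneg (tent_nonneg _ _ _)]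
    exact mul_le_of_le_one_right (abs_nonneg _) (tent_le_one hr _ _)
  · simp only [not_exists, not_lt] at h
    exact .inl (bumpSum_eq_zero hr h)

/-- Near any point, `bumpSum` agrees with a single bump or with `0`: the supports of the bumps
are `2r` apart. -/
theorem continuous_bumpSum (hp : Pairwise fun i j => 4 * r ≤ |p i - p j|) (hr : 0 < r) :
    Continuous (bumpSum p r a) := by
  refine continuous_iff_continuousAt.2 fun z₀ => ?_
  have hball : ∀ᶠ z in 𝓝 z₀, |z - z₀| < r / 2 := by
    filter_upwards [Metric.ball_mem_nhds z₀ (half_pos hr)] with z hz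
    rwa [Metric.mem_ball, Real.dist_eq] at hz
  by_cases h : ∃ i, |z₀ - p i| < 3 * r / 2
  · obtain ⟨i, hi⟩ := h
    refine ((continuous_tent (p i) r).continuousAt.const_mul (a i)).congr ?_
    filter_upwards [hball] with z hz
    have : |z - p i| ≤ |z - z₀| + |z₀ - p i| := abs_sub_le _ _ _
    exact (bumpSum_eq_single hp hr (by linarith)).symm
  · simp only [not_exists, not_lt] at h
    refine continuousAt_const.congr (f := fun _ => (0 : ℝ)) ?_
    filter_upwards [hball] with z hz
    refine (bumpSum_eq_zero hr fun i => ?_).symm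
    have : |z₀ - p i| ≤ |z₀ - z| + |z - p i| := abs_sub_le _ _ _
    linarith [h i, abs_sub_comm z z₀]

end bumpSum

theorem elog_of_ne_top {x : ℝ≥0∞} (hx : x ≠ ⊤) : elog x = (Real.log x.toReal : EReal) :=
  if_neg hx

theorem log_le_elog {x : ℝ≥0∞} {m : ℕ} (hm : 0 < m) (h : (m : ℝ≥0∞) ≤ x) :
    (Real.log m : EReal) ≤ elog x := by
  by_cases hx : x = ⊤
  · simp [hx, elog]
  · rw [elog_of_ne_top hx, EReal.coe_le_coe_iff]
    exact Real.log_le_log (by positivity) (by simpa using ENNReal.toReal_mono hx h)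

theorem elog_le_log {x : ℝ≥0∞} {m : ℕ} (hm : 1 ≤ m) (h : x ≤ m) :
    elog x ≤ (Real.log m : EReal) := by
  rw [elog_of_ne_top (ne_top_of_le_ne_top (by simp) h), EReal.coe_le_coe_iff]
  rcases ENNReal.toReal_nonneg.eq_or_lt with h0 | h0
  · rw [← h0, Real.log_zero]
    exact Real.log_nonneg (by exact_mod_cast hm)
  · exact Real.log_le_log h0 (by simpa using ENNReal.toReal_mono (by simp) h)

section Entropy

variable {X : Type*} {d : X → X → ℝ} {T : ℝ → X → X} {K : Set X} {t ε : ℝ}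

theorem card_le_maxSep {S : Finset X} (hSK : ↑S ⊆ K) (hS : IsSepSet d T t ε ↑S) :
    (S.card : ℝ≥0∞) ≤ maxSep d T K t ε :=
  le_iSup₂_of_le S ⟨hSK, hS⟩ le_rfl

theorem maxSep_le {N : ℕ} (h : ∀ S : Finset X, ↑S ⊆ K → IsSepSet d T t ε ↑S → S.card ≤ N) :
    maxSep d T K t ε ≤ N :=
  iSup₂_le fun S hS => Nat.cast_le.2 (h S hS.1 hS.2)

theorem exists_isSepSet_card_eq {α : Type*} [Fintype α] (hd : ∀ x, d x x = 0) (hε : 0 < ε)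
    {F : α → X} (hF : ∀ a b, a ≠ b → ∃ u ∈ Icc 0 t, ε ≤ d (T u (F a)) (T u (F b))) :
    ∃ S : Finset X, S.card = Fintype.card α ∧ (∀ x ∈ S, ∃ a, F a = x) ∧ IsSepSet d T t ε ↑S := by
  classical
  have hinj : Function.Injective F := fun a b hab => by
    by_contra hne
    obtain ⟨u, -, hu⟩ := hF a b hne
    rw [hab, hd] at hu
    linarith
  refine ⟨Finset.univ.image F, by simp [Finset.card_image_of_injective _ hinj], by simp, ?_⟩
  simp only [IsSepSet, Finset.coe_image, Finset.coe_univ, image_univ, forall_mem_range]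
  exact fun a b hne => hF a b fun h => hne (h ▸ rfl)

theorem entropyOn_empty : entropyOn d T ∅ = 0 := by
  have hzero : ∀ t ε, elog (maxSep d T ∅ t ε) = 0 := fun t ε => by
    have h0 : maxSep d T ∅ t ε = 0 := by
      simpa using maxSep_le (N := 0) fun S hS _ => by
        simp [Finset.coe_eq_empty.1 (subset_empty_iff.1 hS)]
    simp [h0, elog_of_ne_top]
  refine le_antisymm (iSup₂_le fun ε _ => ?_) (le_iSup₂_of_le 1 one_pos ?_) <;>
    simp [hzero]

theorem entropyFam_nonneg (A : Set X) : 0 ≤ entropyFam d T A :=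
  le_iSup₂_of_le ∅ ⟨empty_subset A, fun _ hu => (hu 0).elim⟩ entropyOn_empty.ge

theorem DSeqCompact.exists_finset_net (hK : DSeqCompact d K)
    (hsymm : ∀ x ∈ K, ∀ y ∈ K, d x y = d y x)
    (htri : ∀ x ∈ K, ∀ y ∈ K, ∀ z ∈ K, d x z ≤ d x y + d y z) (hε : 0 < ε) :
    ∃ F : Finset X, ↑F ⊆ K ∧ ∀ x ∈ K, ∃ c ∈ F, d c x < ε := by
  by_contra! h
  obtain ⟨u, huK, hu⟩ := exists_seq_of_forall_finset_exists (· ∈ K) (fun x y => ε ≤ d x y)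
    fun F hF => h F fun x hx => hF x hx
  obtain ⟨g, hgK, φ, hφ, hlim⟩ := hK u huK
  obtain ⟨N, hN⟩ := Metric.tendsto_atTop.1 hlim (ε / 2) (half_pos hε)
  have h₁ := hN N le_rfl
  have h₂ := hN (N + 1) N.le_succ
  rw [Real.dist_eq, sub_zero] at h₁ h₂
  have := htri _ (huK (φ N)) g hgK _ (huK (φ (N + 1)))
  rw [hsymm g hgK _ (huK _)] at this
  linarith [hu _ _ (hφ N.lt_succ_self), abs_lt.1 h₁, abs_lt.1 h₂]

/-- Two points of a separated set cannot share a net point, as every `T u` is `B`-Lipschitz. -/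
theorem card_le_of_isSepSet (hε : 0 < ε) {B : ℝ} (hB : 0 ≤ B)
    (hsymm : ∀ x ∈ K, ∀ y ∈ K, d x y = d y x)
    (htri : ∀ x ∈ K, ∀ y ∈ K, ∀ z ∈ K, d x z ≤ d x y + d y z)
    (hT : ∀ u, 0 ≤ u → ∀ x ∈ K, ∀ y ∈ K, d (T u x) (T u y) ≤ B * d x y)
    {F : Finset X} (hFK : ↑F ⊆ K) (hF : ∀ x ∈ K, ∃ c ∈ F, d c x < ε / (2 * (B + 1)))
    {S : Finset X} (hSK : ↑S ⊆ K) (hS : IsSepSet d T t ε ↑S) : S.card ≤ F.card := by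
  choose! c hcF hc using hF
  refine Finset.card_le_card_of_injOn c (fun x hx => hcF x (hSK hx)) fun x hx y hy hxy => ?_
  by_contra hne
  obtain ⟨u, hu, hsep⟩ := hS x hx y hy hne
  have hxK := hSK hx
  have hyK := hSK hy
  have hcK := hFK (hcF x hxK)
  have hdxy : d x y < ε / (B + 1) := by
    have htri' := htri x hxK (c x) hcK y hyK
    rw [hsymm x hxK _ hcK] at htri'
    have hcy := hc y hyK
    rw [← hxy] at hcy
    have hcx := hc x hxK
    have : ε / (2 * (B + 1)) * 2 = ε / (B + 1) := by field_simp
    linarith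
  have : B * (ε / (B + 1)) < ε := by
    rw [mul_div_assoc', div_lt_iff₀ (by positivity)]
    nlinarith
  linarith [hT u hu.1 x hxK y hyK, mul_le_mul_of_nonneg_left hdxy.le hB]

theorem entropyOn_nonpos (hK : DSeqCompact d K) (hsymm : ∀ x ∈ K, ∀ y ∈ K, d x y = d y x)
    (htri : ∀ x ∈ K, ∀ y ∈ K, ∀ z ∈ K, d x z ≤ d x y + d y z) {B : ℝ} (hB : 0 ≤ B)
    (hT : ∀ u, 0 ≤ u → ∀ x ∈ K, ∀ y ∈ K, d (T u x) (T u y) ≤ B * d x y) :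
    entropyOn d T K ≤ 0 := by
  refine iSup₂_le fun ε hε => ?_
  obtain ⟨F, hFK, hF⟩ := hK.exists_finset_net hsymm htri (ε := ε / (2 * (B + 1))) (by positivity)
  have hsep (t : ℝ) : maxSep d T K t ε ≤ (F.card + 1 : ℕ) :=
    maxSep_le fun S hSK hS =>
      (card_le_of_isSepSet hε hB hsymm htri hT hFK hF hSK hS).trans F.card.le_succ
  have hlim : Tendsto (fun t : ℝ => ((t⁻¹ * Real.log (F.card + 1 : ℕ) : ℝ) : EReal))
      atTop (𝓝 0) := by
    simpa using EReal.tendsto_coe.2 (tendsto_inv_atTop_zero.mul_const (Real.log (F.card + 1 : ℕ)))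
  refine (limsup_le_limsup ?_).trans hlim.limsup_eq.le
  filter_upwards [eventually_gt_atTop 0] with t ht
  rw [EReal.coe_mul]
  exact mul_le_mul_of_nonneg_left (elog_le_log (Nat.le_add_left 1 _) (hsep t))
    (by exact_mod_cast (inv_pos.2 ht).le)

theorem entropyOn_eq_top (hε : 0 < ε)
    (h : ∀ n : ℕ, ∃ t ≥ (n : ℝ), ∃ S : Finset X, ↑S ⊆ K ∧ IsSepSet d T t ε ↑S ∧
      n * t ≤ Real.log S.card) :
    entropyOn d T K = ⊤ := by
  refine eq_top_mono (le_iSup₂_of_le ε hε le_rfl) ((EReal.eq_top_iff_forall_lt _).2 fun C => ?_)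
  refine (EReal.coe_lt_coe_iff.2 (lt_add_one C)).trans_le
    (le_limsup_of_frequently_le' (frequently_atTop.2 fun a => ?_))
  obtain ⟨n, hn⟩ := exists_nat_ge (max (max a (C + 1)) 1)
  obtain ⟨t, htn, S, hSK, hS, hlog⟩ := h n
  simp only [max_le_iff] at hn
  have ht : 0 < t := by linarith
  have hcard : 0 < S.card := Nat.pos_of_ne_zero fun h0 => by
    rw [h0, Nat.cast_zero, Real.log_zero] at hlog
    nlinarith
  refine ⟨t, by linarith, ?_⟩
  calc ((C + 1 : ℝ) : EReal) ≤ ((t⁻¹ * Real.log S.card : ℝ) : EReal) := by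
        rw [EReal.coe_le_coe_iff, le_inv_mul_iff₀ ht]
        nlinarith
    _ = ((t⁻¹ : ℝ) : EReal) * (Real.log S.card : EReal) := EReal.coe_mul _ _
    _ ≤ ((t⁻¹ : ℝ) : EReal) * elog (maxSep d T K t ε) :=
        mul_le_mul_of_nonneg_left (log_le_elog hcard (card_le_maxSep hSK hS))
          (by exact_mod_cast (inv_pos.2 ht).le)

theorem dSeqCompact_insert_iUnion (hd : ∀ x, d x x = 0) {x₀ : X} {S : ℕ → Finset X}
    {b : ℕ → ℝ} (hb : Tendsto b atTop (𝓝 0)) (hS : ∀ n, ∀ x ∈ S n, |d x x₀| ≤ b n) :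
    DSeqCompact d (insert x₀ (⋃ n, (S n : Set X))) := by
  classical
  intro u hu
  by_cases hrep : ∃ g ∈ insert x₀ (⋃ n, (S n : Set X)), ∃ᶠ k in atTop, u k = g
  · obtain ⟨g, hg, hfreq⟩ := hrep
    obtain ⟨φ, hφ, hφg⟩ := extraction_of_frequently_atTop hfreq
    exact ⟨g, hg, φ, hφ, by simp [hφg, hd]⟩
  simp only [not_exists, not_and, not_frequently] at hrep
  refine ⟨x₀, mem_insert _ _, id, strictMono_id, Metric.tendsto_atTop.2 fun ε hε => ?_⟩
  obtain ⟨N, hN⟩ := eventually_atTop.1 (hb.eventually (gt_mem_nhds hε))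
  have hfresh : ∀ᶠ k in atTop, ∀ x ∈ (Finset.range N).biUnion S, u k ≠ x :=
    (eventually_all_finset _).2 fun x hx => by
      obtain ⟨n, -, hxn⟩ := Finset.mem_biUnion.1 hx
      exact hrep x (mem_insert_of_mem _ (mem_iUnion.2 ⟨n, hxn⟩))
  obtain ⟨k₀, hk₀⟩ := eventually_atTop.1 hfresh
  refine ⟨k₀, fun k hk => ?_⟩
  rcases hu k with h | h
  · simpa [h, hd] using hε
  obtain ⟨n, hn⟩ := mem_iUnion.1 h
  have hNn : N ≤ n := not_lt.1 fun hlt =>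
    hk₀ k hk _ (Finset.mem_biUnion.2 ⟨n, Finset.mem_range.2 hlt, hn⟩) rfl
  rw [id, Real.dist_eq, sub_zero]
  exact (hS n _ hn).trans_lt (hN n hNn)

end Entropy

section Weight

variable {v : ℝ → ℝ}

def HasLocalDecayBound (v : ℝ → ℝ) : Prop :=
  ∀ s : ℝ, ∃ C : ℝ, ∀ x y, 0 ≤ x → x ≤ y → y ≤ x + s → v x ≤ C * v y

theorem AdmissibleWeight.hasLocalDecayBound (hv : AdmissibleWeight v) :
    HasLocalDecayBound v := by
  obtain ⟨hpos, -, M, hM, w, hw, hgrow⟩ := hv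
  refine fun s => ⟨M * Real.exp (w * s), fun x y hx hxy hys => ?_⟩
  calc v x ≤ M * Real.exp (w * (y - x)) * v (x + (y - x)) := hgrow x hx _ (sub_nonneg.2 hxy)
    _ ≤ M * Real.exp (w * s) * v y := by
      rw [add_sub_cancel]
      gcongr
      · exact (hpos y (hx.trans hxy)).le
      · linarith

theorem exists_ratio_bound (hpos : ∀ x, 0 ≤ x → 0 < v x) (hbdd : BddAbove (ratioSet v)) :
    ∃ R, 0 ≤ R ∧ ∀ x y, 0 ≤ x → x ≤ y → v x ≤ R * v y := by
  obtain ⟨B, hB⟩ := hbdd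
  refine ⟨max B 0, le_max_right _ _, fun x y hx hxy => ?_⟩
  have hy := hpos y (hx.trans hxy)
  calc v x = v x / v y * v y := (div_mul_cancel₀ _ hy.ne').symm
    _ ≤ max B 0 * v y := by
      gcongr
      exact (hB ⟨x, y, hx, hxy, rfl⟩).trans (le_max_left _ _)

theorem c0Norm_nonneg (hpos : ∀ x, 0 ≤ x → 0 < v x) (f : ℝ → ℝ) : 0 ≤ c0Norm v f :=
  Real.sSup_nonneg <| forall_mem_image.2 fun x hx => mul_nonneg (abs_nonneg _) (hpos x hx).le

theorem c0Norm_le {f : ℝ → ℝ} {b : ℝ} (hb : 0 ≤ b) (h : ∀ x, 0 ≤ x → |f x| * v x ≤ b) :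
    c0Norm v f ≤ b :=
  Real.sSup_le (forall_mem_image.2 h) hb

@[simp]
theorem c0Norm_zero : c0Norm v 0 = 0 := by
  simp [c0Norm, nonempty_Ici.image_const]

theorem c0Norm_sub_comm (f g : ℝ → ℝ) : c0Norm v (f - g) = c0Norm v (g - f) := by
  simp only [c0Norm, Pi.sub_apply, abs_sub_comm]

theorem c0Norm_smul (c : ℝ) (f : ℝ → ℝ) : c0Norm v (c • f) = |c| * c0Norm v f := by
  rw [c0Norm, c0Norm, ← smul_eq_mul, ← Real.sSup_smul_of_nonneg (abs_nonneg c), ← image_smul,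
    image_image]
  simp only [Pi.smul_apply, smul_eq_mul, abs_mul, mul_assoc]

theorem memC0_zero : MemC0 v 0 :=
  ⟨continuousOn_const, by simp⟩

theorem memC0_of_continuous_of_eq_zero {f : ℝ → ℝ} (hf : Continuous f) {b : ℝ}
    (hb : ∀ x, b ≤ x → f x = 0) : MemC0 v f := by
  refine ⟨hf.continuousOn, tendsto_const_nhds.congr' ?_⟩
  filter_upwards [eventually_ge_atTop b] with x hx
  simp [hb x hx]

namespace MemC0

variable {f g : ℝ → ℝ}

theorem sub (hpos : ∀ x, 0 ≤ x → 0 < v x) (hf : MemC0 v f) (hg : MemC0 v g) :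
    MemC0 v (f - g) := by
  refine ⟨hf.1.sub hg.1, ?_⟩
  refine squeeze_zero' ?_ ?_ (by simpa using hf.2.add hg.2)
  · filter_upwards [eventually_ge_atTop 0] with x hx
    exact mul_nonneg (abs_nonneg _) (hpos x hx).le
  · filter_upwards [eventually_ge_atTop 0] with x hx
    rw [← add_mul]
    exact mul_le_mul_of_nonneg_right (abs_sub _ _) (hpos x hx).le

theorem const_smul (hf : MemC0 v f) (c : ℝ) : MemC0 v (c • f) := by
  refine ⟨hf.1.const_smul c, ?_⟩
  simpa [abs_mul, mul_assoc] using hf.2.const_mul |c|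

theorem translate (hpos : ∀ x, 0 ≤ x → 0 < v x) (hdec : HasLocalDecayBound v)
    (hf : MemC0 v f) {t : ℝ} (ht : 0 ≤ t) : MemC0 v (translateW t f) := by
  obtain ⟨C, hC⟩ := hdec t
  refine ⟨hf.1.comp (by fun_prop) fun x (hx : 0 ≤ x) => (by simp; linarith : x + t ∈ Ici 0), ?_⟩
  have hlim : Tendsto (fun x => C * (|f (x + t)| * v (x + t))) atTop (𝓝 0) := by
    simpa using (hf.2.comp (tendsto_atTop_add_const_right _ t tendsto_id)).const_mul C
  refine squeeze_zero' ?_ ?_ hlim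
  · filter_upwards [eventually_ge_atTop 0] with x hx
    exact mul_nonneg (abs_nonneg _) (hpos x hx).le
  · filter_upwards [eventually_ge_atTop 0] with x hx
    calc |f (x + t)| * v x ≤ |f (x + t)| * (C * v (x + t)) := by
          gcongr
          exact hC x (x + t) hx (by linarith) le_rfl
      _ = C * (|f (x + t)| * v (x + t)) := by ring

theorem bddAbove (hpos : ∀ x, 0 ≤ x → 0 < v x) (hdec : HasLocalDecayBound v) (hf : MemC0 v f) :
    BddAbove ((fun x => |f x| * v x) '' Ici 0) := by
  obtain ⟨a, ha⟩ := eventually_atTop.1 (hf.2.eventually (ge_mem_nhds zero_lt_one))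
  set a' := max a 0
  obtain ⟨Cf, hCf⟩ := isCompact_Icc.exists_bound_of_continuousOn
    (hf.1.mono (Icc_subset_Ici_self : Icc 0 a' ⊆ Ici 0))
  obtain ⟨C, hC⟩ := hdec a'
  refine ⟨max 1 (Cf * (C * v a')), forall_mem_image.2 fun x (hx : 0 ≤ x) => ?_⟩
  rcases le_or_gt x a' with hxa | hxa
  · refine le_max_of_le_right ?_
    have hfx : |f x| ≤ Cf := hCf x ⟨hx, hxa⟩
    exact mul_le_mul hfx (hC x a' hx hxa (by linarith)) (hpos x hx).le ((abs_nonneg _).trans hfx)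
  · exact le_max_of_le_left (ha x ((le_max_left a 0).trans hxa.le))

theorem le_c0Norm (hpos : ∀ x, 0 ≤ x → 0 < v x) (hdec : HasLocalDecayBound v) (hf : MemC0 v f)
    {x : ℝ} (hx : 0 ≤ x) : |f x| * v x ≤ c0Norm v f :=
  le_csSup (hf.bddAbove hpos hdec) (mem_image_of_mem _ hx)

end MemC0

theorem c0Norm_sub_le (hpos : ∀ x, 0 ≤ x → 0 < v x) (hdec : HasLocalDecayBound v)
    {f g h : ℝ → ℝ} (hf : MemC0 v f) (hg : MemC0 v g) (hh : MemC0 v h) :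
    c0Norm v (f - h) ≤ c0Norm v (f - g) + c0Norm v (g - h) := by
  refine c0Norm_le (add_nonneg (c0Norm_nonneg hpos _) (c0Norm_nonneg hpos _)) fun x hx => ?_
  calc |(f - h) x| * v x ≤ |(f - g) x| * v x + |(g - h) x| * v x := by
        rw [← add_mul]
        exact mul_le_mul_of_nonneg_right (abs_sub_le _ _ _) (hpos x hx).le
    _ ≤ c0Norm v (f - g) + c0Norm v (g - h) :=
        add_le_add ((hf.sub hpos hg).le_c0Norm hpos hdec hx)
          ((hg.sub hpos hh).le_c0Norm hpos hdec hx)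

theorem c0Norm_translate_le {R : ℝ} (hR0 : 0 ≤ R)
    (hR : ∀ x y, 0 ≤ x → x ≤ y → v x ≤ R * v y) {f : ℝ → ℝ} {t b : ℝ} (ht : 0 ≤ t) (hb : 0 ≤ b)
    (hfb : ∀ x, t ≤ x → |f x| * v x ≤ b) : c0Norm v (translateW t f) ≤ R * b := by
  refine c0Norm_le (mul_nonneg hR0 hb) fun x hx => ?_
  calc |f (x + t)| * v x ≤ |f (x + t)| * (R * v (x + t)) := by
        gcongr
        exact hR x (x + t) hx (by linarith)
    _ = R * (|f (x + t)| * v (x + t)) := by ring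
    _ ≤ R * b := by
        gcongr
        exact hfb _ (by linarith)

theorem c0Norm_translate_le_mul (hpos : ∀ x, 0 ≤ x → 0 < v x) (hdec : HasLocalDecayBound v)
    {R : ℝ} (hR0 : 0 ≤ R) (hR : ∀ x y, 0 ≤ x → x ≤ y → v x ≤ R * v y) {f : ℝ → ℝ}
    (hf : MemC0 v f) {t : ℝ} (ht : 0 ≤ t) : c0Norm v (translateW t f) ≤ R * c0Norm v f :=
  c0Norm_translate_le hR0 hR ht (c0Norm_nonneg hpos f) fun _ hx =>
    hf.le_c0Norm hpos hdec (ht.trans hx)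

theorem tendsto_c0Norm_translate (hpos : ∀ x, 0 ≤ x → 0 < v x) {R : ℝ} (hR0 : 0 ≤ R)
    (hR : ∀ x y, 0 ≤ x → x ≤ y → v x ≤ R * v y) {f : ℝ → ℝ} (hf : MemC0 v f) :
    Tendsto (fun t => c0Norm v (translateW t f)) atTop (𝓝 0) := by
  refine Metric.tendsto_atTop.2 fun ε hε => ?_
  have hε' : 0 < ε / (R + 1) := by positivity
  obtain ⟨a, ha⟩ := eventually_atTop.1 (hf.2.eventually (ge_mem_nhds hε'))
  refine ⟨max a 0, fun t ht => ?_⟩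
  have hle := c0Norm_translate_le hR0 hR (le_of_max_le_right ht) hε'.le fun x hx =>
    ha x ((le_of_max_le_left ht).trans hx)
  have : R * (ε / (R + 1)) < ε := by
    rw [mul_div_assoc', div_lt_iff₀ (by positivity)]
    nlinarith
  rw [Real.dist_eq, sub_zero, abs_of_nonneg (c0Norm_nonneg hpos _)]
  linarith

theorem uniformEquicontinuous_of_bound (hpos : ∀ x, 0 ≤ x → 0 < v x) {B : ℝ} (hB0 : 0 ≤ B)
    (hB : ∀ f, MemC0 v f → ∀ t, 0 ≤ t → c0Norm v (translateW t f) ≤ B * c0Norm v f) :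
    ∀ ε > (0 : ℝ), ∃ δ > (0 : ℝ), ∀ t, 0 ≤ t → ∀ f g, MemC0 v f → MemC0 v g →
      c0Norm v (f - g) < δ → c0Norm v (translateW t f - translateW t g) < ε := by
  refine fun ε hε => ⟨ε / (B + 1), by positivity, fun t ht f g hf hg hfg => ?_⟩
  have : B * (ε / (B + 1)) < ε := by
    rw [mul_div_assoc', div_lt_iff₀ (by positivity)]
    nlinarith
  calc c0Norm v (translateW t (f - g)) ≤ B * c0Norm v (f - g) := hB _ (hf.sub hpos hg) t ht
    _ ≤ B * (ε / (B + 1)) := by gcongr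
    _ < ε := this

theorem exists_bound_of_equicontinuousAt_zero (hpos : ∀ x, 0 ≤ x → 0 < v x)
    (h : ∃ δ > (0 : ℝ), ∀ t, 0 ≤ t → ∀ g, MemC0 v g →
      c0Norm v (0 - g) < δ → c0Norm v (translateW t 0 - translateW t g) < 1) :
    ∃ B, 0 ≤ B ∧ ∀ f, MemC0 v f → ∀ t, 0 ≤ t → c0Norm v (translateW t f) ≤ B * c0Norm v f := by
  obtain ⟨δ, hδ, h⟩ := h
  refine ⟨δ⁻¹, inv_nonneg.2 hδ.le, fun f hf t ht => le_of_forall_pos_lt_add fun η hη => ?_⟩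
  have hf0 := c0Norm_nonneg hpos f
  set c := δ / (c0Norm v f + η * δ)
  have hc : 0 < c := by positivity
  have hcf : c0Norm v (0 - c • f) < δ := by
    rw [c0Norm_sub_comm, sub_zero, c0Norm_smul, abs_of_pos hc, div_mul_eq_mul_div,
      div_lt_iff₀ (by positivity)]
    nlinarith [mul_pos hδ (mul_pos hη hδ)]
  have hTf := h t ht _ (hf.const_smul c) hcf
  have hsub : translateW t (0 : ℝ → ℝ) - translateW t (c • f) = -(c • translateW t f) := by
    ext; simp [translateW]
  rw [hsub, ← neg_smul, c0Norm_smul, abs_neg, abs_of_pos hc, ← lt_div_iff₀' hc, one_div_div,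
    add_div, mul_div_cancel_right₀ _ hδ.ne', div_eq_inv_mul] at hTf
  exact hTf

theorem entropyFam_translate_eq_zero (hpos : ∀ x, 0 ≤ x → 0 < v x)
    (hdec : HasLocalDecayBound v) {B : ℝ} (hB0 : 0 ≤ B)
    (hB : ∀ f, MemC0 v f → ∀ t, 0 ≤ t → c0Norm v (translateW t f) ≤ B * c0Norm v f) :
    entropyFam (fun f g => c0Norm v (f - g)) translateW {f | MemC0 v f} = 0 := by
  refine le_antisymm (iSup₂_le fun K ⟨hKA, hK⟩ => ?_) (entropyFam_nonneg _)
  refine entropyOn_nonpos hK (fun f _ g _ => c0Norm_sub_comm f g) (fun f hf g hg h hh => ?_) hB0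
    fun u hu f hf g hg => hB _ ((hKA hf).sub hpos (hKA hg)) u hu
  exact c0Norm_sub_le hpos hdec (hKA hf) (hKA hg) (hKA hh)

theorem one_le_c0Norm_translate (hpos : ∀ x, 0 ≤ x → 0 < v x) (hdec : HasLocalDecayBound v)
    {f : ℝ → ℝ} (hf : MemC0 v f) {x u : ℝ} (hx : 0 ≤ x) (hu : 0 ≤ u)
    (hfx : |f (x + u)| = (v x)⁻¹) : 1 ≤ c0Norm v (translateW u f) := by
  have := (hf.translate hpos hdec hu).le_c0Norm hpos hdec hx
  rwa [translateW, hfx, inv_mul_cancel₀ (hpos x hx).ne'] at this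

/-- Unbounded ratios force `y - x` to be large, since `v x ≤ C s * v y` whenever `y ≤ x + s`. -/
theorem exists_block (hpos : ∀ x, 0 ≤ x → 0 < v x) (hdec : HasLocalDecayBound v)
    (hunb : ¬ BddAbove (ratioSet v)) {η : ℝ} (hη : 0 < η) {s : ℝ} (hs : 1 ≤ s) :
    ∃ x y, 0 ≤ x ∧ x + s ≤ y ∧ ∀ z, y - 1 ≤ z → z ≤ y → v z ≤ η * v x := by
  obtain ⟨C, hC⟩ := hdec s
  obtain ⟨K, hK⟩ := hdec 1
  obtain ⟨_, ⟨x, y, hx, hxy, rfl⟩, hlt⟩ := not_bddAbove_iff.1 hunb (max C (K / η))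
  have hy := hpos y (hx.trans hxy)
  have hbig : max C (K / η) * v y < v x := (lt_div_iff₀ hy).1 hlt
  have hfar : x + s ≤ y := by
    by_contra! h
    linarith [hC x y hx hxy h.le, mul_le_mul_of_nonneg_right (le_max_left C (K / η)) hy.le]
  refine ⟨x, y, hx, hfar, fun z hz hzy => ?_⟩
  have hKy : K / η * v y < v x := by
    linarith [mul_le_mul_of_nonneg_right (le_max_right C (K / η)) hy.le]
  calc v z ≤ K * v y := hK z y (by linarith) hzy (by linarith)
    _ = η * (K / η * v y) := by field_simp
    _ ≤ η * v x := by gcongr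

theorem exists_block_seq (hpos : ∀ x, 0 ≤ x → 0 < v x) (hdec : HasLocalDecayBound v)
    (hunb : ¬ BddAbove (ratioSet v)) :
    ∃ x y : ℕ → ℝ, (∀ n, 0 ≤ x n) ∧ (∀ n, x n + n + 1 ≤ y n) ∧ (∀ n, y n + 1 ≤ y (n + 1)) ∧
      ∀ n z, y n - 1 ≤ z → z ≤ y n → v z ≤ (1 / 2) ^ n * v (x n) := by
  have step (n : ℕ) (A : ℝ) : ∃ q : ℝ × ℝ, 0 ≤ q.1 ∧ q.1 + n + 1 ≤ q.2 ∧ A + 1 ≤ q.2 ∧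
      ∀ z, q.2 - 1 ≤ z → z ≤ q.2 → v z ≤ (1 / 2) ^ n * v q.1 := by
    obtain ⟨x, y, hx, hxy, hblock⟩ := exists_block hpos hdec hunb (η := (1 / 2) ^ n)
      (by positivity) (s := n + 1 + |A|) (by linarith [n.cast_nonneg (α := ℝ), abs_nonneg A])
    exact ⟨(x, y), hx, by linarith [abs_nonneg A],
      by linarith [le_abs_self A, n.cast_nonneg (α := ℝ)], hblock⟩
  choose q hq using step
  let r : ℕ → ℝ × ℝ := fun n => Nat.rec (q 0 0) (fun n p => q (n + 1) p.2) n
  have hr (n : ℕ) : 0 ≤ (r n).1 ∧ (r n).1 + n + 1 ≤ (r n).2 ∧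
      ∀ z, (r n).2 - 1 ≤ z → z ≤ (r n).2 → v z ≤ (1 / 2) ^ n * v (r n).1 := by
    obtain ⟨A, hA⟩ : ∃ A, r n = q n A := by cases n <;> exact ⟨_, rfl⟩
    rw [hA]
    exact ⟨(hq n A).1, (hq n A).2.1, (hq n A).2.2.2⟩
  exact ⟨fun n => (r n).1, fun n => (r n).2, fun n => (hr n).1, fun n => (hr n).2.1,
    fun n => (hq (n + 1) (r n).2).2.2.1, fun n => (hr n).2.2⟩

theorem one_le_abs_sub_of_ne {m : ℕ} {i j : Fin m} (h : i ≠ j) : 1 ≤ |(i : ℝ) - j| := by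
  have hij : ((i : ℕ) : ℤ) - (j : ℕ) ≠ 0 := sub_ne_zero.2 (by exact_mod_cast Fin.val_injective.ne h)
  exact_mod_cast Int.one_le_abs hij

theorem exists_bump_centers (a : ℝ) (m : ℕ) :
    ∃ h > 0, ∃ p : Fin m → ℝ, (Pairwise fun i j => 4 * h ≤ |p i - p j|) ∧
      ∀ j z, |z - p j| < h → a < z ∧ z < a + 1 := by
  set h : ℝ := 1 / (4 * (m + 1)) with hdef
  have hh : 0 < h := by positivity
  have h1 : 4 * (m + 1) * h = 1 := by rw [hdef]; field_simp
  refine ⟨h, hh, fun j => a + (4 * j + 2) * h, fun i j hij => ?_, fun j z hz => ?_⟩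
  · beta_reduce
    rw [show a + (4 * i + 2) * h - (a + (4 * j + 2) * h) = 4 * h * ((i : ℝ) - j) by ring,
      abs_mul, abs_of_pos (by positivity)]
    exact le_mul_of_one_le_right (by positivity) (one_le_abs_sub_of_ne hij)
  · have hj : (j : ℝ) + 1 ≤ m := by exact_mod_cast j.isLt
    rw [abs_lt] at hz
    constructor <;> nlinarith [j.val.cast_nonneg (α := ℝ)]

theorem pairwise_one_le_abs_sub {y : ℕ → ℝ} (hy : ∀ n, y n + 1 ≤ y (n + 1)) :
    Pairwise fun m n => 1 ≤ |y m - y n| := by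
  have hmono : Monotone y := monotone_nat_of_le_succ fun n => by linarith [hy n]
  intro m n hmn
  wlog h : m < n generalizing m n
  · rw [abs_sub_comm]
    exact this hmn.symm (hmn.lt_or_gt.resolve_left h)
  rw [abs_sub_comm, abs_of_nonneg] <;> linarith [hy m, hmono (Nat.succ_le_of_lt h)]

theorem memC0_bumpSum_of_blocks (hpos : ∀ x, 0 ≤ x → 0 < v x) {x y : ℕ → ℝ}
    (hx : ∀ n, 0 ≤ x n) (hxy : ∀ n, x n + n + 1 ≤ y n) (hy : ∀ n, y n + 1 ≤ y (n + 1))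
    (hblock : ∀ n z, y n - 1 ≤ z → z ≤ y n → v z ≤ (1 / 2) ^ n * v (x n)) :
    MemC0 v (bumpSum (fun n => y n - 1 / 2) (1 / 4) fun n => (v (x n))⁻¹) := by
  have hmono : Monotone y := monotone_nat_of_le_succ fun n => by linarith [hy n]
  have hp : Pairwise fun m n => 4 * (1 / 4 : ℝ) ≤ |(y m - 1 / 2) - (y n - 1 / 2)| := by
    simpa using pairwise_one_le_abs_sub hy
  refine ⟨(continuous_bumpSum hp (by norm_num)).continuousOn,
    Metric.tendsto_atTop.2 fun ε hε => ?_⟩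
  obtain ⟨N, hN⟩ := exists_pow_lt_of_lt_one hε (by norm_num : (1 / 2 : ℝ) < 1)
  refine ⟨y N, fun z hz => ?_⟩
  have hz0 : 0 ≤ z := by linarith [hx N, hxy N, N.cast_nonneg (α := ℝ)]
  rw [Real.dist_eq, sub_zero, abs_of_nonneg (mul_nonneg (abs_nonneg _) (hpos z hz0).le)]
  refine lt_of_le_of_lt ?_ hN
  rcases bumpSum_eq_zero_or (a := fun n => (v (x n))⁻¹) hp (by norm_num) z with h | ⟨n, hn, hfz⟩
  · rw [h, abs_zero, zero_mul]
    positivity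
  rw [abs_lt] at hn
  have hNn : N ≤ n := by
    by_contra! h
    linarith [hmono h.le]
  have hvx := hpos _ (hx n)
  rw [abs_of_pos (inv_pos.2 hvx)] at hfz
  calc _ ≤ (v (x n))⁻¹ * ((1 / 2) ^ n * v (x n)) :=
        mul_le_mul hfz (hblock n z (by linarith) (by linarith)) (hpos z hz0).le (by positivity)
    _ = (1 / 2) ^ n := by field_simp
    _ ≤ (1 / 2) ^ N := pow_le_pow_of_le_one (by norm_num) (by norm_num) hNn

theorem exists_memC0_not_tendsto (hpos : ∀ x, 0 ≤ x → 0 < v x) (hdec : HasLocalDecayBound v)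
    (hunb : ¬ BddAbove (ratioSet v)) :
    ∃ f, MemC0 v f ∧ ¬ Tendsto (fun t => c0Norm v (translateW t f)) atTop (𝓝 0) := by
  obtain ⟨x, y, hx, hxy, hy, hblock⟩ := exists_block_seq hpos hdec hunb
  have hf := memC0_bumpSum_of_blocks hpos hx hxy hy hblock
  refine ⟨_, hf, fun hlim => ?_⟩
  obtain ⟨t₀, ht₀⟩ := eventually_atTop.1 (hlim.eventually (gt_mem_nhds one_pos))
  obtain ⟨n, hn⟩ := exists_nat_ge t₀
  have hu : (n : ℝ) ≤ y n - 1 / 2 - x n := by linarith [hxy n]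
  have hp : Pairwise fun m n => 4 * (1 / 4 : ℝ) ≤ |(y m - 1 / 2) - (y n - 1 / 2)| := by
    simpa using pairwise_one_le_abs_sub hy
  have hcenter : |bumpSum (fun n => y n - 1 / 2) (1 / 4) (fun n => (v (x n))⁻¹)
      (x n + (y n - 1 / 2 - x n))| = (v (x n))⁻¹ := by
    rw [add_sub_cancel, bumpSum_apply_center hp (by norm_num),
      abs_of_pos (inv_pos.2 (hpos _ (hx n)))]
  linarith [ht₀ _ (hn.trans hu), one_le_c0Norm_translate hpos hdec hf (hx n)
    ((n.cast_nonneg).trans hu) hcenter]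

/-- Two on/off patterns differing at the bump centred at `p` are `1`-apart at time `p - x`. -/
theorem exists_separated_finset (hpos : ∀ x, 0 ≤ x → 0 < v x) (hdec : HasLocalDecayBound v)
    {x y η : ℝ} (hx : 0 ≤ x) (hxy : x + 1 ≤ y) (hη : ∀ z, y - 1 ≤ z → z ≤ y → v z ≤ η * v x)
    (m : ℕ) :
    ∃ S : Finset (ℝ → ℝ), S.card = 2 ^ m ∧ (∀ f ∈ S, MemC0 v f ∧ c0Norm v f ≤ η) ∧
      IsSepSet (fun f g => c0Norm v (f - g)) translateW (y - x) 1 ↑S := by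
  obtain ⟨h, hh, p, hp, hpy⟩ := exists_bump_centers (y - 1) m
  rw [sub_add_cancel] at hpy
  have hvx := hpos x hx
  let a (c : Fin m → Bool) (j : Fin m) : ℝ := if c j then (v x)⁻¹ else 0
  let F (c : Fin m → Bool) : ℝ → ℝ := bumpSum p h (a c)
  have hF (c) : MemC0 v (F c) :=
    memC0_of_continuous_of_eq_zero (continuous_bumpSum hp hh) fun z hz =>
      bumpSum_eq_zero hh fun j => not_lt.1 fun hj => (hpy j z hj).2.not_ge hz
  have hFnorm (c) : c0Norm v (F c) ≤ η := by
    have hη0 : 0 ≤ η := nonneg_of_mul_nonneg_left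
      ((hpos y (by linarith)).le.trans (hη y (by linarith) le_rfl)) hvx
    refine c0Norm_le hη0 fun z hz => ?_
    rcases bumpSum_eq_zero_or (a := a c) hp hh z with h0 | ⟨j, hj, hFz⟩
    · simp [F, h0, hη0]
    have ha : |a c j| ≤ (v x)⁻¹ := by
      simp only [a]; split_ifs <;> simp [abs_of_pos hvx, hvx.le]
    calc |F c z| * v z ≤ (v x)⁻¹ * (η * v x) :=
          mul_le_mul (hFz.trans ha) (hη z (hpy j z hj).1.le (hpy j z hj).2.le) (hpos z hz).le
            (by positivity)
      _ = η := by field_simp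
  have hsep (c c') (hcc' : c ≠ c') :
      ∃ u ∈ Icc 0 (y - x), 1 ≤ c0Norm v (translateW u (F c) - translateW u (F c')) := by
    obtain ⟨j, hj⟩ := Function.ne_iff.1 hcc'
    have hpj := hpy j (p j) (by simpa using hh)
    refine ⟨p j - x, ⟨by linarith, by linarith⟩, one_le_c0Norm_translate hpos hdec
      ((hF c).sub hpos (hF c')) hx (by linarith) ?_⟩
    simp only [add_sub_cancel, Pi.sub_apply, F, bumpSum_apply_center hp hh]
    cases hc : c j <;> cases hc' : c' j <;> simp_all [a, hvx.le]
  obtain ⟨S, hcard, hSF, hS⟩ := exists_isSepSet_card_eq (d := fun f g => c0Norm v (f - g))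
    (T := translateW) (by simp) one_pos hsep
  refine ⟨S, by simpa using hcard, fun f hf => ?_, hS⟩
  obtain ⟨c, rfl⟩ := hSF f hf
  exact ⟨hF c, hFnorm c⟩

theorem entropyFam_translate_eq_top (hpos : ∀ x, 0 ≤ x → 0 < v x) (hdec : HasLocalDecayBound v)
    (hunb : ¬ BddAbove (ratioSet v)) :
    entropyFam (fun f g => c0Norm v (f - g)) translateW {f | MemC0 v f} = ⊤ := by
  have hstage (n : ℕ) : ∃ t ≥ (n : ℝ), ∃ S : Finset (ℝ → ℝ),
      (∀ f ∈ S, MemC0 v f ∧ c0Norm v f ≤ (1 / 2) ^ n) ∧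
      IsSepSet (fun f g => c0Norm v (f - g)) translateW t 1 ↑S ∧ n * t ≤ Real.log S.card := by
    have hn := n.cast_nonneg (α := ℝ)
    obtain ⟨x, y, hx, hxy, hblock⟩ := exists_block hpos hdec hunb (η := (1 / 2) ^ n)
      (by positivity) (s := n + 1) (by linarith)
    obtain ⟨S, hcard, hS, hsep⟩ :=
      exists_separated_finset hpos hdec hx (by linarith) hblock ⌈2 * n * (y - x)⌉₊
    refine ⟨y - x, by linarith, S, hS, hsep, ?_⟩
    rw [hcard, Nat.cast_pow, Real.log_pow, Nat.cast_ofNat]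
    nlinarith [Nat.le_ceil (2 * n * (y - x)), Real.log_two_gt_d9]
  choose t ht S hS hsep hlog using hstage
  set K := insert (0 : ℝ → ℝ) (⋃ n, (S n : Set (ℝ → ℝ)))
  have hKA : K ⊆ {f | MemC0 v f} :=
    insert_subset memC0_zero (iUnion_subset fun n f hf => (hS n f hf).1)
  have hK : DSeqCompact (fun f g => c0Norm v (f - g)) K :=
    dSeqCompact_insert_iUnion (by simp) (tendsto_pow_atTop_nhds_zero_of_lt_one
      (r := 1 / 2) (by norm_num) (by norm_num)) fun n f hf => by
        simpa [abs_of_nonneg (c0Norm_nonneg hpos f)] using (hS n f hf).2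
  have hKtop : entropyOn (fun f g => c0Norm v (f - g)) translateW K = ⊤ :=
    entropyOn_eq_top one_pos fun n => ⟨t n, ht n, S n,
      (subset_iUnion (fun n => (S n : Set (ℝ → ℝ))) n).trans (subset_insert _ _), hsep n, hlog n⟩
  exact eq_top_mono (le_iSup₂_of_le K ⟨hKA, hK⟩ le_rfl) hKtop

end Weight

theorem c0_translation_infinite_entropy_tfae
    (v : ℝ → ℝ) (hv : AdmissibleWeight v) :
    List.TFAE
      [ -- (1) sup { v x / v y : 0 ≤ x ≤ y } = ∞
        (∀ B : ℝ, ∃ r ∈ ratioSet v, B < r),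
        -- (2) some f ∈ X does not tend to 0 in norm under translation
        (∃ f, MemC0 v f ∧
          ¬ Filter.Tendsto (fun t => c0Norm v (translateW t f)) Filter.atTop (nhds 0)),
        -- (3) 𝒯 is not uniformly bounded
        (¬ ∃ B : ℝ, 0 ≤ B ∧ ∀ f, MemC0 v f → ∀ t, 0 ≤ t →
          c0Norm v (translateW t f) ≤ B * c0Norm v f),
        -- (4) 𝒯 is not uniformly equicontinuous
        (¬ ∀ ε > (0:ℝ), ∃ δ > (0:ℝ), ∀ t, 0 ≤ t → ∀ f g, MemC0 v f → MemC0 v g →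
          c0Norm v (f - g) < δ → c0Norm v (translateW t f - translateW t g) < ε),
        -- (5) 𝒯 is not equicontinuous
        (¬ ∀ ε > (0:ℝ), ∀ f, MemC0 v f → ∃ δ > (0:ℝ), ∀ t, 0 ≤ t → ∀ g, MemC0 v g →
          c0Norm v (f - g) < δ → c0Norm v (translateW t f - translateW t g) < ε),
        -- (6) 𝒯 has nonzero entropy
        (entropyFam (fun f g => c0Norm v (f - g)) translateW {f | MemC0 v f} ≠ 0),
        -- (7) 𝒯 has infinite entropy
        (entropyFam (fun f g => c0Norm v (f - g)) translateW {f | MemC0 v f} = ⊤) ] := by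
  have hpos := hv.1
  have hdec := hv.hasLocalDecayBound
  have hunb : (∀ B : ℝ, ∃ r ∈ ratioSet v, B < r) ↔ ¬ BddAbove (ratioSet v) :=
    not_bddAbove_iff.symm
  tfae_have 1 → 2 := fun h1 => exists_memC0_not_tendsto hpos hdec (hunb.1 h1)
  tfae_have 2 → 1 := fun ⟨f, hf, hnot⟩ => hunb.2 fun hbdd => by
    obtain ⟨R, hR0, hR⟩ := exists_ratio_bound hpos hbdd
    exact hnot (tendsto_c0Norm_translate hpos hR0 hR hf)
  tfae_have 3 → 1 := fun h3 => hunb.2 fun hbdd => by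
    obtain ⟨R, hR0, hR⟩ := exists_ratio_bound hpos hbdd
    exact h3 ⟨R, hR0, fun f hf t ht => c0Norm_translate_le_mul hpos hdec hR0 hR hf ht⟩
  tfae_have 4 → 3 := fun h4 ⟨B, hB0, hB⟩ => h4 (uniformEquicontinuous_of_bound hpos hB0 hB)
  tfae_have 5 → 4 := fun h5 huec => h5 fun ε hε f hf =>
    let ⟨δ, hδ, h⟩ := huec ε hε
    ⟨δ, hδ, fun t ht g hg => h t ht f g hf hg⟩
  tfae_have 6 → 5 := fun h6 hec => h6 <| by
    obtain ⟨B, hB0, hB⟩ := exists_bound_of_equicontinuousAt_zero hpos (hec 1 one_pos 0 memC0_zero)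
    exact entropyFam_translate_eq_zero hpos hdec hB0 hB
  tfae_have 7 → 6 := fun h7 => h7 ▸ EReal.top_ne_zero
  tfae_have 1 → 7 := fun h1 => entropyFam_translate_eq_top hpos hdec (hunb.1 h1)
  tfae_finish
end

section
/- Let 0 < p < ∞ and let v be an admissible weight function. If sup{ v(x)/v(y) : 0 ≤ x ≤ y } < ∞, then for every f ∈ L^p_v(ℝ₊), T_t f converges to 0 in norm as t → ∞. -/
open MeasureTheory Filter Set
open scoped ENNReal

/-- The `L^p_v` norm of a function on `[0,∞)`:
`‖f‖ = (∫₀^∞ |f(x)|^p v(x) dx)^(1/p)`. -/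
noncomputable def lpNorm (p : ℝ) (v : ℝ → ℝ) (f : ℝ → ℝ) : ℝ :=
  (∫ x in Set.Ici (0:ℝ), |f x| ^ p * v x) ^ (1 / p)

/-- Membership in the weighted Lebesgue space `L^p_v(ℝ₊)`. -/
def MemLpW (p : ℝ) (v : ℝ → ℝ) (f : ℝ → ℝ) : Prop :=
  AEStronglyMeasurable f (volume.restrict (Set.Ici (0:ℝ))) ∧
    IntegrableOn (fun x => |f x| ^ p * v x) (Set.Ici (0:ℝ))

/-! Since `v x ≤ C v (x + t)` for `x, t ≥ 0`, the substitution `y = x + t` bounds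
`‖T_t f‖^p` by `C ∫_t^∞ |f|^p v`, the tail of a convergent integral. -/

open Topology

theorem setIntegral_Ici_comp_add_right {E : Type*} [NormedAddCommGroup E] [NormedSpace ℝ E]
    (g : ℝ → E) (a t : ℝ) : ∫ x in Ici a, g (x + t) = ∫ y in Ici (a + t), g y := by
  have hpre : (· + t) ⁻¹' Ici (a + t) = Ici a := by ext x; simp
  rw [← hpre, (measurePreserving_add_right volume t).setIntegral_preimage_emb
    (measurableEmbedding_addRight t)]

theorem integrableOn_Ici_comp_add_right_iff {E : Type*} [NormedAddCommGroup E]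
    {g : ℝ → E} {a t : ℝ} :
    IntegrableOn (fun x => g (x + t)) (Ici a) ↔ IntegrableOn g (Ici (a + t)) := by
  have hpre : (· + t) ⁻¹' Ici (a + t) = Ici a := by ext x; simp
  rw [← hpre]
  exact (measurePreserving_add_right volume t).integrableOn_comp_preimage
    (measurableEmbedding_addRight t)

theorem exists_le_mul_of_bddAbove_ratioSet {v : ℝ → ℝ} (hv : ∀ x, 0 ≤ x → 0 < v x)
    (hbdd : BddAbove (ratioSet v)) : ∃ C, ∀ x y, 0 ≤ x → x ≤ y → v x ≤ C * v y := by
  obtain ⟨C, hC⟩ := hbdd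
  refine ⟨C, fun x y hx hxy => ?_⟩
  rw [← div_le_iff₀ (hv y (hx.trans hxy))]
  exact hC ⟨x, y, hx, hxy, rfl⟩

section Translate

variable {g v : ℝ → ℝ} {C : ℝ}

theorem setIntegral_Ici_comp_add_mul_le (hg : ∀ x, 0 ≤ g x) (hv : ∀ x, 0 ≤ x → 0 ≤ v x)
    (hC : ∀ x y, 0 ≤ x → x ≤ y → v x ≤ C * v y)
    (hgv : IntegrableOn (fun y => g y * v y) (Ici 0)) {t : ℝ} (ht : 0 ≤ t) :
    ∫ x in Ici 0, g (x + t) * v x ≤ C * ∫ y in Ici t, g y * v y := by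
  have hshift := setIntegral_Ici_comp_add_right (fun y => C * (g y * v y)) 0 t
  rw [zero_add] at hshift
  rw [← integral_const_mul, ← hshift]
  refine integral_mono_of_nonneg ?_ ?_ ?_
  · filter_upwards [ae_restrict_mem measurableSet_Ici] with x hx
    exact mul_nonneg (hg _) (hv x hx)
  · refine integrableOn_Ici_comp_add_right_iff (g := fun y => C * (g y * v y)) |>.mpr ?_
    rw [zero_add]
    exact (hgv.mono_set (Ici_subset_Ici.mpr ht)).const_mul C
  · filter_upwards [ae_restrict_mem measurableSet_Ici] with x hx
    calc g (x + t) * v x ≤ g (x + t) * (C * v (x + t)) :=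
          mul_le_mul_of_nonneg_left (hC x (x + t) hx (by linarith)) (hg _)
      _ = C * (g (x + t) * v (x + t)) := by ring

theorem tendsto_setIntegral_Ici_comp_add_mul_zero (hg : ∀ x, 0 ≤ g x)
    (hv : ∀ x, 0 ≤ x → 0 ≤ v x) (hC : ∀ x y, 0 ≤ x → x ≤ y → v x ≤ C * v y)
    (hgv : IntegrableOn (fun y => g y * v y) (Ici 0)) :
    Tendsto (fun t => ∫ x in Ici 0, g (x + t) * v x) atTop (𝓝 0) := by
  have htail : Tendsto (fun t => C * ∫ y in Ici t, g y * v y) atTop (𝓝 0) := by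
    simpa using (tendsto_integral_Ici_zero tendsto_id).const_mul C
  refine tendsto_of_tendsto_of_tendsto_of_le_of_le' tendsto_const_nhds htail ?_ ?_
  · exact Eventually.of_forall fun t => setIntegral_nonneg measurableSet_Ici
      fun x hx => mul_nonneg (hg _) (hv x hx)
  · filter_upwards [eventually_ge_atTop 0] with t ht
    exact setIntegral_Ici_comp_add_mul_le hg hv hC hgv ht

end Translate

theorem lp_translate_tendsto_zero_of_bounded_ratio
    (p : ℝ) (hp : 0 < p) (v : ℝ → ℝ) (hv : AdmissibleWeight v)
    (hbdd : BddAbove (ratioSet v)) :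
    ∀ f, MemLpW p v f →
      Filter.Tendsto (fun t => lpNorm p v (translateW t f)) Filter.atTop (nhds 0) := by
  intro f hf
  have hvpos := hv.1
  obtain ⟨C, hC⟩ := exists_le_mul_of_bddAbove_ratioSet hvpos hbdd
  have hI := tendsto_setIntegral_Ici_comp_add_mul_zero (g := fun y => |f y| ^ p)
    (fun y => Real.rpow_nonneg (abs_nonneg _) p) (fun x hx => (hvpos x hx).le) hC hf.2
  have hroot : Tendsto (fun s : ℝ => s ^ (1 / p)) (𝓝 0) (𝓝 0) := by
    have h := (Real.continuousAt_rpow_const 0 (1 / p) (Or.inr (one_div_pos.mpr hp).le)).tendsto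
    rwa [Real.zero_rpow (one_div_pos.mpr hp).ne'] at h
  exact hroot.comp hI
end

section
/- Let v be an admissible weight function. If sup{ v(x)/v(y) : 0 ≤ x ≤ y } < ∞, then for every f ∈ C_{0,v}(ℝ₊), T_t f converges to 0 in norm as t → ∞. -/
open MeasureTheory Filter Set
open scoped ENNReal

theorem c0_translate_tendsto_zero_of_bounded_ratio
    (v : ℝ → ℝ) (hv : AdmissibleWeight v)
    (hbdd : BddAbove (ratioSet v)) :
    ∀ f, MemC0 v f →
      Filter.Tendsto (fun t => c0Norm v (translateW t f)) Filter.atTop (nhds 0) := by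
  obtain ⟨hpos, -, -⟩ := hv
  obtain ⟨C, hC⟩ := hbdd
  have hC1 : 1 ≤ C := by
    have h1 : (1 : ℝ) ∈ ratioSet v := ⟨0, 0, le_refl 0, le_refl 0,
      (div_self (ne_of_gt (hpos 0 le_rfl))).symm⟩
    exact hC h1
  have hCpos : 0 < C := lt_of_lt_of_le one_pos hC1
  intro f hf
  rw [Metric.tendsto_atTop]
  intro ε hε
  have hε' : 0 < ε / (2 * C) := div_pos hε (by linarith)
  have hev : ∀ᶠ y in Filter.atTop, |f y| * v y < ε / (2 * C) :=
    hf.2 (Iio_mem_nhds hε')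
  obtain ⟨N, hN⟩ := Filter.eventually_atTop.mp hev
  refine ⟨max N 0, fun t ht => ?_⟩
  have htN : N ≤ t := le_trans (le_max_left _ _) ht
  have ht0 : 0 ≤ t := le_trans (le_max_right _ _) ht
  -- every element of the image set is ≤ ε/2
  have hub : ∀ a ∈ (fun x => |translateW t f x| * v x) '' Set.Ici (0:ℝ), a ≤ ε / 2 := by
    rintro a ⟨x, hx, rfl⟩
    have hx0 : (0:ℝ) ≤ x := hx
    have hxt : 0 ≤ x + t := by linarith
    have hvxt : 0 < v (x + t) := hpos _ hxt
    have hratio : v x / v (x + t) ≤ C := hC ⟨x, x + t, hx0, by linarith, rfl⟩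
    have hvx : v x ≤ C * v (x + t) := by
      rw [div_le_iff₀ hvxt] at hratio; linarith
    have hfxt : |f (x + t)| * v (x + t) < ε / (2 * C) := hN _ (by linarith)
    have h1 : |translateW t f x| * v x ≤ C * (|f (x + t)| * v (x + t)) := by
      simp only [translateW]
      calc |f (x + t)| * v x ≤ |f (x + t)| * (C * v (x + t)) :=
            mul_le_mul_of_nonneg_left hvx (abs_nonneg _)
        _ = C * (|f (x + t)| * v (x + t)) := by ring
    calc |translateW t f x| * v x ≤ C * (|f (x + t)| * v (x + t)) := h1
      _ ≤ C * (ε / (2 * C)) :=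
          mul_le_mul_of_nonneg_left (le_of_lt hfxt) (le_of_lt hCpos)
      _ = ε / 2 := by field_simp
  have hne : ((fun x => |translateW t f x| * v x) '' Set.Ici (0:ℝ)).Nonempty :=
    ⟨_, ⟨0, Set.self_mem_Ici, rfl⟩⟩
  have hbdd' : BddAbove ((fun x => |translateW t f x| * v x) '' Set.Ici (0:ℝ)) :=
    ⟨ε / 2, fun a ha => hub a ha⟩
  have hle : c0Norm v (translateW t f) ≤ ε / 2 := csSup_le hne hub
  have hge : 0 ≤ c0Norm v (translateW t f) := by
    have hmem : |translateW t f 0| * v 0 ∈ (fun x => |translateW t f x| * v x) '' Set.Ici (0:ℝ) :=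
      ⟨0, Set.self_mem_Ici, rfl⟩
    have := le_csSup hbdd' hmem
    have h0 : 0 ≤ |translateW t f 0| * v 0 :=
      mul_nonneg (abs_nonneg _) (le_of_lt (hpos 0 le_rfl))
    exact le_trans h0 this
  rw [Real.dist_eq, sub_zero, abs_of_nonneg hge]
  linarith
end

section
/- Let 0 < p < ∞ and let v be an admissible weight function. If sup{ v(x)/v(y) : 0 ≤ x ≤ y } = ∞, then there exists f ∈ L^p_v(ℝ₊) such that T_t f does not converge to 0 in norm as t → ∞. -/
open MeasureTheory Filter Set
open scoped ENNReal

/-!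
Admissibility gives `v x ≤ M e^{w (y - x)} v y` for `0 ≤ x ≤ y`. Hence `v` changes by at most a
factor `K = M e^w` over a unit interval, and a ratio `v x / v y` above `M e^{w T}` forces
`y - x > T`. So we can pick `0 ≤ xₙ ≤ yₙ` with `v xₙ > 2ⁿ K² v yₙ`, `yₙ - xₙ → ∞` and the
intervals `[yₙ - 1, yₙ)` disjoint, and put a bump of `p`-th power `bₙ = 2⁻ⁿ / (K v yₙ)` on the
`n`-th interval. Its contribution to `‖f‖ᵖ` is at most `bₙ K v yₙ = 2⁻ⁿ`, while the translation
by `yₙ - 1 - xₙ` moves it onto `[xₙ, xₙ + 1)`, where `v ≥ v xₙ / K`, so that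
`‖T f‖ᵖ ≥ bₙ v xₙ / K > 1`.
-/

open Function

namespace AdmissibleWeight

variable {v : ℝ → ℝ}

theorem pos (hv : AdmissibleWeight v) {x : ℝ} (hx : 0 ≤ x) : 0 < v x := hv.1 x hx

theorem exists_le_mul_exp_mul_sub (hv : AdmissibleWeight v) :
    ∃ M w : ℝ, 0 < M ∧ 0 ≤ w ∧
      ∀ x y, 0 ≤ x → x ≤ y → v x ≤ M * Real.exp (w * (y - x)) * v y := by
  obtain ⟨-, -, M, hM, w, hw, h⟩ := hv
  refine ⟨M, w, by linarith, hw, fun x y hx hxy => ?_⟩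
  simpa using h x hx (y - x) (by linarith)

theorem exists_le_mul_of_le_add_one (hv : AdmissibleWeight v) :
    ∃ K : ℝ, 0 < K ∧ ∀ x y, 0 ≤ x → x ≤ y → y ≤ x + 1 → v x ≤ K * v y := by
  obtain ⟨M, w, hM, hw, h⟩ := hv.exists_le_mul_exp_mul_sub
  refine ⟨M * Real.exp w, by positivity, fun x y hx hxy hyx => (h x y hx hxy).trans ?_⟩
  have : w * (y - x) ≤ w := mul_le_of_le_one_right hw (by linarith)
  gcongr
  exact (hv.pos (hx.trans hxy)).le

theorem exists_far_pair_of_unbounded (hv : AdmissibleWeight v)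
    (hsup : ∀ B : ℝ, ∃ r ∈ ratioSet v, B < r) (C T : ℝ) :
    ∃ x y, 0 ≤ x ∧ T < y - x ∧ C * v y < v x := by
  obtain ⟨M, w, hM, hw, h⟩ := hv.exists_le_mul_exp_mul_sub
  obtain ⟨_, ⟨x, y, hx, hxy, rfl⟩, hr⟩ := hsup (max C (M * Real.exp (w * T)))
  have hvy := hv.pos (hx.trans hxy)
  rw [lt_div_iff₀ hvy] at hr
  refine ⟨x, y, hx, not_le.1 fun hT => ?_,
    (mul_le_mul_of_nonneg_right (le_max_left _ _) hvy.le).trans_lt hr⟩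
  have : M * Real.exp (w * (y - x)) * v y ≤ max C (M * Real.exp (w * T)) * v y := by
    refine mul_le_mul_of_nonneg_right (le_trans ?_ (le_max_right _ _)) hvy.le
    gcongr
  linarith [h x y hx hxy]

theorem integrableOn_of_subset_Icc (hv : AdmissibleWeight v) {s : Set ℝ} {b : ℝ}
    (hs : s ⊆ Icc 0 b) : IntegrableOn v s :=
  (hv.2.1 (max b 0) (le_max_right _ _)).mono_set
    (hs.trans (Icc_subset_Icc_right (le_max_left _ _)))

theorem aestronglyMeasurable (hv : AdmissibleWeight v) :
    AEStronglyMeasurable v (volume.restrict (Ici (0 : ℝ))) := by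
  refine LocallyIntegrableOn.aestronglyMeasurable ?_
  refine (locallyIntegrableOn_iff isClosed_Ici.isLocallyClosed).2 fun k hk hkc => ?_
  obtain ⟨b, hb⟩ := hkc.bddAbove
  exact hv.integrableOn_of_subset_Icc fun x hx => ⟨hk hx, hb hx⟩

theorem integrableOn_translateW (hv : AdmissibleWeight v) {p : ℝ} {f : ℝ → ℝ} (hf : Measurable f)
    (hfv : IntegrableOn (fun x => |f x| ^ p * v x) (Ici 0)) {t : ℝ} (ht : 0 ≤ t) :
    IntegrableOn (fun x => |translateW t f x| ^ p * v x) (Ici 0) := by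
  obtain ⟨M, w, -, -, h⟩ := hv.exists_le_mul_exp_mul_sub
  have hshift : IntegrableOn (fun x => |f (x + t)| ^ p * v (x + t)) (Ici 0) := by
    have := ((measurePreserving_add_right volume t).integrableOn_comp_preimage
      (measurableEmbedding_addRight t) (s := Ici t)).2 (hfv.mono_set (Ici_subset_Ici.2 ht))
    simpa [preimage_add_const_Ici, comp_def] using this
  refine (hshift.const_mul (M * Real.exp (w * t))).mono' ?_ ?_
  · exact ((hf.comp (measurable_add_const t)).abs.pow_const p).aestronglyMeasurable.mul
      hv.aestronglyMeasurable
  · refine (ae_restrict_iff' measurableSet_Ici).2 (Eventually.of_forall fun x hx => ?_)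
    have hfp : 0 ≤ |f (x + t)| ^ p := by positivity
    simp only [translateW]
    rw [Real.norm_of_nonneg (mul_nonneg hfp (hv.pos hx).le)]
    calc |f (x + t)| ^ p * v x ≤ |f (x + t)| ^ p * (M * Real.exp (w * (x + t - x)) * v (x + t)) :=
          mul_le_mul_of_nonneg_left (h x (x + t) hx (by linarith)) hfp
      _ = M * Real.exp (w * t) * (|f (x + t)| ^ p * v (x + t)) := by ring_nf

theorem setIntegral_Ico_sub_one_le (hv : AdmissibleWeight v) {K : ℝ}
    (hloc : ∀ x y, 0 ≤ x → x ≤ y → y ≤ x + 1 → v x ≤ K * v y) {y : ℝ} (hy : 1 ≤ y) :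
    ∫ x in Ico (y - 1) y, v x ≤ K * v y := by
  have hsub : Ico (y - 1) y ⊆ Icc 0 y := fun x hx => ⟨by linarith [hx.1], hx.2.le⟩
  calc ∫ x in Ico (y - 1) y, v x ≤ ∫ _ in Ico (y - 1) y, K * v y :=
        setIntegral_mono_on (hv.integrableOn_of_subset_Icc hsub) (integrableOn_const (by simp))
          measurableSet_Ico fun x hx => hloc x y (by linarith [hx.1]) hx.2.le (by linarith [hx.1])
    _ = K * v y := by simp

theorem le_mul_setIntegral_Ico_add_one (hv : AdmissibleWeight v) {K : ℝ} (hK : 0 < K)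
    (hloc : ∀ x y, 0 ≤ x → x ≤ y → y ≤ x + 1 → v x ≤ K * v y) {x : ℝ} (hx : 0 ≤ x) :
    v x ≤ K * ∫ s in Ico x (x + 1), v s := by
  have hsub : Ico x (x + 1) ⊆ Icc 0 (x + 1) := fun s hs => ⟨hx.trans hs.1, hs.2.le⟩
  have := setIntegral_ge_of_const_le_real measurableSet_Ico (by simp)
    (fun s hs => (div_le_iff₀' hK).2 (hloc x s hx hs.1 hs.2.le))
    (hv.integrableOn_of_subset_Icc hsub)
  rw [Real.volume_real_Ico_of_le (by linarith), add_sub_cancel_left, mul_one] at this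
  rwa [← div_le_iff₀' hK]

end AdmissibleWeight

section Bumps

variable {S : ℕ → Set ℝ} {a : ℕ → ℝ}

noncomputable def bumps (S : ℕ → Set ℝ) (a : ℕ → ℝ) (x : ℝ) : ℝ :=
  ∑' n, (S n).indicator (fun _ => a n) x

theorem bumps_of_mem (hS : Pairwise (Disjoint on S)) {n : ℕ} {x : ℝ} (hx : x ∈ S n) :
    bumps S a x = a n := by
  rw [bumps, tsum_eq_single n fun m hm => indicator_of_notMem
    (Set.disjoint_left.1 (hS hm.symm) hx) _, indicator_of_mem hx]

theorem bumps_of_notMem {x : ℝ} (hx : x ∉ ⋃ n, S n) : bumps S a x = 0 := by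
  simp only [mem_iUnion, not_exists] at hx
  simp [bumps, indicator_of_notMem (hx _)]

theorem hasSum_bumps (hS : Pairwise (Disjoint on S)) (x : ℝ) :
    HasSum (fun n => (S n).indicator (fun _ => a n) x) (bumps S a x) := by
  by_cases hx : x ∈ ⋃ n, S n
  · obtain ⟨n, hn⟩ := mem_iUnion.1 hx
    rw [bumps_of_mem hS hn, ← indicator_of_mem hn fun _ => a n]
    exact hasSum_single n fun m hm => indicator_of_notMem (Set.disjoint_left.1 (hS hm.symm) hn) _
  · rw [bumps_of_notMem hx]
    simp only [mem_iUnion, not_exists] at hx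
    simp [indicator_of_notMem (hx _), hasSum_zero]

theorem measurable_bumps (hS : Pairwise (Disjoint on S)) (hSm : ∀ n, MeasurableSet (S n)) :
    Measurable (bumps S a) :=
  measurable_of_tendsto_metrizable' atTop
    (fun k => Finset.measurable_sum (Finset.range k) fun n _ => measurable_const.indicator (hSm n))
    (tendsto_pi_nhds.2 fun x => (hasSum_bumps hS x).tendsto_sum_nat)

theorem memLpW_bumps {p : ℝ} {v : ℝ → ℝ} (hp : 0 < p) (hS : Pairwise (Disjoint on S))
    (hSm : ∀ n, MeasurableSet (S n)) (hv : ∀ n, IntegrableOn v (S n))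
    (hv0 : ∀ n, ∀ x ∈ S n, 0 ≤ v x) (hsum : Summable fun n => |a n| ^ p * ∫ x in S n, v x) :
    MemLpW p v (bumps S a) := by
  refine ⟨(measurable_bumps hS hSm).aestronglyMeasurable, ?_⟩
  have hpiece : ∀ n, EqOn (fun x => |bumps S a x| ^ p * v x) (fun x => |a n| ^ p * v x) (S n) :=
    fun n x hx => by simp only [bumps_of_mem hS hx]
  have hnorm : ∀ n, ∫ x in S n, ‖|bumps S a x| ^ p * v x‖ = |a n| ^ p * ∫ x in S n, v x := by
    intro n
    rw [← integral_const_mul]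
    refine setIntegral_congr_fun (hSm n) fun x hx => ?_
    rw [bumps_of_mem hS hx, Real.norm_of_nonneg (mul_nonneg (by positivity) (hv0 n x hx))]
  have hunion := integrableOn_iUnion_of_summable_integral_norm
    (fun n => IntegrableOn.congr_fun ((hv n).const_mul _) (hpiece n).symm (hSm n))
    (hsum.congr fun n => (hnorm n).symm)
  refine hunion.of_forall_sdiff_eq_zero measurableSet_Ici fun x hx => ?_
  simp [bumps_of_notMem hx.2, Real.zero_rpow hp.ne']

end Bumps

theorem abs_rpow_mul_setIntegral_le {p : ℝ} {v g : ℝ → ℝ} {E : Set ℝ} {c : ℝ}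
    (hg : IntegrableOn (fun x => |g x| ^ p * v x) (Ici 0)) (hv : ∀ x, 0 ≤ x → 0 ≤ v x)
    (hE : MeasurableSet E) (hE0 : E ⊆ Ici 0) (hgE : ∀ x ∈ E, g x = c) :
    |c| ^ p * ∫ x in E, v x ≤ ∫ x in Ici 0, |g x| ^ p * v x := by
  rw [← integral_const_mul]
  calc ∫ x in E, |c| ^ p * v x = ∫ x in E, |g x| ^ p * v x :=
        setIntegral_congr_fun hE fun x hx => by simp only [hgE x hx]
    _ ≤ ∫ x in Ici 0, |g x| ^ p * v x :=
        setIntegral_mono_set hg ((ae_restrict_iff' measurableSet_Ici).2 (Eventually.of_forall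
          fun x hx => mul_nonneg (by positivity) (hv x hx))) hE0.eventuallyLE

theorem exists_seq_of_forall_exists_lt_sub {P : ℕ → ℝ → ℝ → Prop}
    (h : ∀ n (T : ℝ), ∃ x y, 0 ≤ x ∧ T < y - x ∧ P n x y) :
    ∃ x y : ℕ → ℝ, (∀ n, 0 ≤ x n) ∧ (∀ n : ℕ, (n : ℝ) + 1 ≤ y n - x n) ∧
      (∀ n, y n + 1 ≤ y (n + 1)) ∧ ∀ n, P n (x n) (y n) := by
  choose X Y hX hXY hP using h
  -- the threshold for step `n + 1` exceeds both `n + 2` and the right endpoint of step `n`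
  let T : ℕ → ℝ := fun n => Nat.rec 1 (fun k t => max ((k : ℝ) + 2) (Y k t + 1)) n
  have hT : ∀ n : ℕ, (n : ℝ) + 1 ≤ T n := by
    rintro (_ | n)
    · simp [T]
    · push_cast
      exact (le_of_eq (by ring)).trans (le_max_left _ (Y n (T n) + 1))
  refine ⟨fun n => X n (T n), fun n => Y n (T n), fun n => hX n _,
    fun n => (hT n).trans (hXY n _).le, fun n => ?_, fun n => hP n _⟩
  have h1 : Y n (T n) + 1 ≤ T (n + 1) := le_max_right _ _
  linarith [hXY (n + 1) (T (n + 1)), hX (n + 1) (T (n + 1))]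

theorem pairwise_disjoint_Ico_sub_one {y : ℕ → ℝ} (hy : ∀ n, y n + 1 ≤ y (n + 1)) :
    Pairwise (Disjoint on fun n => Ico (y n - 1) (y n)) := by
  have hmono : Monotone fun n => y n - 1 := monotone_nat_of_le_succ fun n => by linarith [hy n]
  refine hmono.pairwise_disjoint_on_Ico_succ.mono fun m n h => h.mono ?_ ?_ <;>
    exact Ico_subset_Ico le_rfl (by rw [Order.succ_eq_add_one]; linarith [hy m, hy n])

theorem AdmissibleWeight.exists_memLpW_forall_one_le_lpNorm_translateW {p : ℝ} (hp : 0 < p)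
    {v : ℝ → ℝ} (hv : AdmissibleWeight v) {K : ℝ} (hK : 0 < K)
    (hloc : ∀ x y, 0 ≤ x → x ≤ y → y ≤ x + 1 → v x ≤ K * v y) {x y : ℕ → ℝ}
    (hx : ∀ n, 0 ≤ x n) (hxy : ∀ n : ℕ, (n : ℝ) + 1 ≤ y n - x n) (hy : ∀ n, y n + 1 ≤ y (n + 1))
    (hratio : ∀ n, 2 ^ n * K ^ 2 * v (y n) < v (x n)) :
    ∃ f, MemLpW p v f ∧ ∀ n, 1 ≤ lpNorm p v (translateW (y n - 1 - x n) f) := by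
  have hy1 : ∀ n, 1 ≤ y n := fun n => by linarith [hx n, hxy n, (n.cast_nonneg : (0 : ℝ) ≤ n)]
  have hKv : ∀ n, 0 < K * v (y n) := fun n => mul_pos hK (hv.pos (by linarith [hy1 n]))
  set b : ℕ → ℝ := fun n => (1 / 2) ^ n / (K * v (y n))
  have hb0 : ∀ n, 0 < b n := fun n => div_pos (by positivity) (hKv n)
  have hb : ∀ n, |b n ^ p⁻¹| ^ p = b n := fun n => by
    rw [abs_of_nonneg (Real.rpow_nonneg (hb0 n).le _), Real.rpow_inv_rpow (hb0 n).le hp.ne']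
  set S : ℕ → Set ℝ := fun n => Ico (y n - 1) (y n)
  have hdisj := pairwise_disjoint_Ico_sub_one hy
  have hS0 : ∀ n, S n ⊆ Ici 0 := fun n s hs => by simp only [mem_Ici]; linarith [hs.1, hy1 n]
  have hSv : ∀ n, b n * ∫ s in S n, v s ≤ (1 / 2) ^ n := fun n => by
    calc b n * ∫ s in S n, v s ≤ b n * (K * v (y n)) :=
          mul_le_mul_of_nonneg_left (hv.setIntegral_Ico_sub_one_le hloc (hy1 n)) (hb0 n).le
      _ = (1 / 2) ^ n := div_mul_cancel₀ _ (hKv n).ne'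
  have hf : MemLpW p v (bumps S fun n => b n ^ p⁻¹) := by
    refine memLpW_bumps hp hdisj (fun _ => measurableSet_Ico)
      (fun n => hv.integrableOn_of_subset_Icc fun s hs => ⟨hS0 n hs, hs.2.le⟩)
      (fun n s hs => (hv.pos (hS0 n hs)).le) ?_
    refine Summable.of_nonneg_of_le (fun n => ?_) (fun n => by simpa [hb] using hSv n)
      summable_geometric_two
    exact mul_nonneg (by positivity)
      (setIntegral_nonneg measurableSet_Ico fun s hs => (hv.pos (hS0 n hs)).le)
  refine ⟨_, hf, fun n => Real.one_le_rpow ?_ (by positivity)⟩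
  have hE : 2 ^ n * (K * v (y n)) ≤ ∫ s in Ico (x n) (x n + 1), v s := by
    have := hv.le_mul_setIntegral_Ico_add_one hK hloc (hx n)
    exact le_of_mul_le_mul_left (by nlinarith [hratio n]) hK
  calc 1 = b n * (2 ^ n * (K * v (y n))) := by
        rw [mul_comm (2 ^ n : ℝ), ← mul_assoc, div_mul_cancel₀ _ (hKv n).ne', ← mul_pow]; norm_num
    _ ≤ b n * ∫ s in Ico (x n) (x n + 1), v s := mul_le_mul_of_nonneg_left hE (hb0 n).le
    _ = |b n ^ p⁻¹| ^ p * ∫ s in Ico (x n) (x n + 1), v s := by rw [hb]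
    _ ≤ _ := abs_rpow_mul_setIntegral_le
        (hv.integrableOn_translateW (measurable_bumps hdisj fun _ => measurableSet_Ico) hf.2
          (by linarith [hxy n, (n.cast_nonneg : (0 : ℝ) ≤ n)]))
        (fun s hs => (hv.pos hs).le) measurableSet_Ico (fun s hs => (hx n).trans hs.1)
        fun s hs => bumps_of_mem hdisj ⟨by linarith [hs.1], by linarith [hs.2]⟩

theorem lp_exists_not_tendsto_zero_of_unbounded_ratio
    (p : ℝ) (hp : 0 < p) (v : ℝ → ℝ) (hv : AdmissibleWeight v)
    (hsup : ∀ B : ℝ, ∃ r ∈ ratioSet v, B < r) :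
    ∃ f, MemLpW p v f ∧
      ¬ Filter.Tendsto (fun t => lpNorm p v (translateW t f)) Filter.atTop (nhds 0) := by
  obtain ⟨K, hK, hloc⟩ := hv.exists_le_mul_of_le_add_one
  obtain ⟨x, y, hx, hxy, hy, hratio⟩ := exists_seq_of_forall_exists_lt_sub fun n =>
    hv.exists_far_pair_of_unbounded hsup (2 ^ n * K ^ 2)
  obtain ⟨f, hf, hlow⟩ :=
    hv.exists_memLpW_forall_one_le_lpNorm_translateW hp hK hloc hx hxy hy hratio
  refine ⟨f, hf, fun h => ?_⟩
  have ht : Tendsto (fun n => y n - 1 - x n) atTop atTop :=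
    tendsto_atTop_mono (fun n => by linarith [hxy n]) tendsto_natCast_atTop_atTop
  exact absurd (ge_of_tendsto (h.comp ht) (Eventually.of_forall hlow)) (by norm_num)
end
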